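/- arXiv:math/0505624 — 3 statements merged into one kernel-verified Lean document; each statement's English description precedes it below -/
import Mathlib

section
/- Let H be a normal subgroup of a group G, where G is generated by a finite set S. Then K(G;S) ≥ (1/2)·K(G,H;S)·K(G; S ∪ H), where K(G,H;S) is the relative Kazhdan constant of the pair (G,H) with respect to S. -/
/-!
Let `ρ` be a unitary representation of `G` without invariant vectors and `v ≠ 0`. A generator
in `S ∪ H` moves `v` by at least `K(G; S ∪ H) ‖v‖`. If it lies in `S` we are done, as
`K(G, H; S) ≤ 2` outside degenerate cases. If it lies in `H`, it only moves the component `v₂`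
of `v` orthogonal to the `H`-fixed vectors, so `‖v₂‖ ≥ K(G; S ∪ H) ‖v‖ / 2`. Since `H` is
normal, the orthogonal complement of the `H`-fixed vectors is a subrepresentation without
`H`-fixed vectors, so some `s ∈ S` moves `v₂`, and hence (by Pythagoras) `v`, by at least
`K(G, H; S) ‖v₂‖`.
-/

open scoped Pointwise

/-- The (relative) Kazhdan constant `K(G, H; S)`: the supremum of all `ε ≥ 0` such that for
every unitary representation of `G` without nonzero `H`-invariant vectors, every nonzero
vector is moved by at least `ε` (relative to its norm) by some element of `S`. -/
noncomputable def kazhdanConst (G : Type) [Group G] (H S : Set G) : ℝ :=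
  sSup {ε : ℝ | 0 ≤ ε ∧
    ∀ (V : Type) [NormedAddCommGroup V] [InnerProductSpace ℂ V] [CompleteSpace V]
      (ρ : G →* (V ≃ₗᵢ[ℂ] V)),
      (∀ v : V, (∀ h ∈ H, ρ h v = v) → v = 0) →
      ∀ v : V, v ≠ 0 → ∃ s ∈ S, ε * ‖v‖ ≤ ‖ρ s v - v‖}

open scoped InnerProductSpace

theorem Real.sSup_mul_sSup_le {A B : Set ℝ} {c : ℝ} (hA : ∀ a ∈ A, 0 ≤ a) (hc : 0 ≤ c)
    (h : ∀ a ∈ A, ∀ b ∈ B, a * b ≤ c) : sSup A * sSup B ≤ c := by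
  rcases (Real.sSup_nonneg hA).eq_or_lt with hA0 | hApos
  · rw [← hA0, zero_mul]; exact hc
  rw [← le_div_iff₀' hApos]
  refine Real.sSup_le (fun b hb => ?_) (div_nonneg hc hApos.le)
  rw [le_div_iff₀' hApos]
  rcases le_or_gt b 0 with hb0 | hbpos
  · exact (mul_nonpos_of_nonneg_of_nonpos hApos.le hb0).trans hc
  rw [← le_div_iff₀ hbpos]
  exact Real.sSup_le (fun a ha => (le_div_iff₀ hbpos).2 (h a ha b hb)) (div_nonneg hc hbpos.le)

theorem LinearIsometryEquiv.norm_apply_sub_le {V : Type*} [SeminormedAddCommGroup V]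
    [NormedSpace ℂ V] (e : V ≃ₗᵢ[ℂ] V) (v : V) : ‖e v - v‖ ≤ 2 * ‖v‖ := by
  calc ‖e v - v‖ ≤ ‖e v‖ + ‖v‖ := norm_sub_le _ _
    _ = 2 * ‖v‖ := by rw [e.norm_map]; ring

theorem norm_le_norm_add_of_mem_orthogonal {V : Type*} [NormedAddCommGroup V]
    [InnerProductSpace ℂ V] {W : Submodule ℂ V} {x y : V} (hx : x ∈ W) (hy : y ∈ Wᗮ) :
    ‖y‖ ≤ ‖x + y‖ := by
  have := norm_add_sq_eq_norm_sq_add_norm_sq_of_inner_eq_zero x y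
    (Submodule.inner_right_of_mem_orthogonal hx hy)
  nlinarith [norm_nonneg (x + y), norm_nonneg y, mul_self_nonneg ‖x‖]

section Representation

variable {G : Type} [Group G] {V : Type} [NormedAddCommGroup V] [InnerProductSpace ℂ V]
  (ρ : G →* (V ≃ₗᵢ[ℂ] V))

def restrictRep (K : Submodule ℂ V) (hK : ∀ g, ∀ w ∈ K, ρ g w ∈ K) : G →* (K ≃ₗᵢ[ℂ] K) where
  toFun g :=
    { toFun w := ⟨ρ g w, hK g w w.2⟩
      invFun w := ⟨ρ g⁻¹ w, hK g⁻¹ w w.2⟩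
      map_add' x y := by ext; simp
      map_smul' c x := by ext; simp
      left_inv w := by ext; simp [LinearIsometryEquiv.coe_inv]
      right_inv w := by ext; simp [LinearIsometryEquiv.coe_inv]
      norm_map' w := (ρ g).norm_map w }
  map_one' := by ext; simp
  map_mul' g h := by ext; simp [LinearIsometryEquiv.coe_mul]

def fixedSubmodule (H : Subgroup G) : Submodule ℂ V where
  carrier := {w | ∀ h ∈ H, ρ h w = w}
  add_mem' hx hy h hh := by rw [map_add, hx h hh, hy h hh]
  zero_mem' _ _ := map_zero _
  smul_mem' c _ hx h hh := by rw [LinearIsometryEquiv.map_smul, hx h hh]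

variable {ρ} {H : Subgroup G}

theorem mem_fixedSubmodule {w : V} : w ∈ fixedSubmodule ρ H ↔ ∀ h ∈ H, ρ h w = w := Iff.rfl

variable (ρ H) in
theorem isClosed_fixedSubmodule : IsClosed (fixedSubmodule ρ H : Set V) := by
  convert isClosed_biInter fun h (_ : h ∈ H) => isClosed_eq (ρ h).continuous continuous_id
  ext; simp [mem_fixedSubmodule]

theorem map_mem_fixedSubmodule (hN : H.Normal) (g : G) {w : V} (hw : w ∈ fixedSubmodule ρ H) :
    ρ g w ∈ fixedSubmodule ρ H := by
  intro h hh
  have hconj : g⁻¹ * h * g ∈ H := by simpa using hN.conj_mem h hh g⁻¹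
  calc ρ h (ρ g w) = ρ g (ρ (g⁻¹ * h * g) w) := by
        simp [LinearIsometryEquiv.coe_mul, LinearIsometryEquiv.coe_inv]
    _ = ρ g w := by rw [hw _ hconj]

theorem map_mem_orthogonal_fixedSubmodule (hN : H.Normal) (g : G) {w : V}
    (hw : w ∈ (fixedSubmodule ρ H)ᗮ) : ρ g w ∈ (fixedSubmodule ρ H)ᗮ := by
  rw [Submodule.mem_orthogonal] at hw ⊢
  intro u hu
  calc ⟪u, ρ g w⟫_ℂ = ⟪ρ g (ρ g⁻¹ u), ρ g w⟫_ℂ := by simp [LinearIsometryEquiv.coe_inv]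
    _ = ⟪ρ g⁻¹ u, w⟫_ℂ := (ρ g).inner_map_map _ _
    _ = 0 := hw _ (map_mem_fixedSubmodule hN g⁻¹ hu)

noncomputable def orthogonalFixedRep (hN : H.Normal) :
    G →* ((fixedSubmodule ρ H)ᗮ ≃ₗᵢ[ℂ] (fixedSubmodule ρ H)ᗮ) :=
  restrictRep ρ _ fun g _ => map_mem_orthogonal_fixedSubmodule hN g

theorem orthogonalFixedRep_eq_zero_of_forall_fixed (hN : H.Normal) {w : (fixedSubmodule ρ H)ᗮ}
    (hw : ∀ h ∈ H, orthogonalFixedRep hN h w = w) : w = 0 := by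
  have hfixed : (w : V) ∈ fixedSubmodule ρ H := fun h hh => congrArg Subtype.val (hw h hh)
  exact Subtype.ext <|
    Submodule.disjoint_def.1 (fixedSubmodule ρ H).orthogonal_disjoint _ hfixed w.2

end Representation

section Kazhdan

variable {G : Type} [Group G]

def kazhdanSet (G : Type) [Group G] (H S : Set G) : Set ℝ :=
  {ε : ℝ | 0 ≤ ε ∧
    ∀ (V : Type) [NormedAddCommGroup V] [InnerProductSpace ℂ V] [CompleteSpace V]
      (ρ : G →* (V ≃ₗᵢ[ℂ] V)),
      (∀ v : V, (∀ h ∈ H, ρ h v = v) → v = 0) →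
      ∀ v : V, v ≠ 0 → ∃ s ∈ S, ε * ‖v‖ ≤ ‖ρ s v - v‖}

theorem kazhdanConst_eq_sSup (H S : Set G) : kazhdanConst G H S = sSup (kazhdanSet G H S) := rfl

theorem kazhdanConst_nonneg (H S : Set G) : 0 ≤ kazhdanConst G H S := by
  rw [kazhdanConst_eq_sSup]
  exact Real.sSup_nonneg fun _ hε => hε.1

theorem le_two_of_mem_kazhdanSet {H S : Set G} {ε : ℝ} (hε : ε ∈ kazhdanSet G H S)
    {V : Type} [NormedAddCommGroup V] [InnerProductSpace ℂ V] [CompleteSpace V]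
    (ρ : G →* (V ≃ₗᵢ[ℂ] V)) (hρ : ∀ v : V, (∀ h ∈ H, ρ h v = v) → v = 0) {v : V} (hv : v ≠ 0) :
    ε ≤ 2 := by
  obtain ⟨s, -, hs⟩ := hε.2 V ρ hρ v hv
  exact le_of_mul_le_mul_right (hs.trans ((ρ s).norm_apply_sub_le v)) (norm_pos_iff.2 hv)

/-- An element above `2` forces every representation without `H`-invariant vectors to vanish, so
the defining condition holds vacuously for every `ε ≥ 0` and `sSup` takes its junk value `0` on the
unbounded set. -/
theorem kazhdanConst_eq_zero_of_two_lt {H S : Set G} {c : ℝ} (hc : c ∈ kazhdanSet G H S)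
    (h2 : 2 < c) (S' : Set G) : kazhdanConst G H S' = 0 := by
  rw [kazhdanConst_eq_sSup]
  refine Real.sSup_of_not_bddAbove <| not_bddAbove_iff.2 fun x =>
    ⟨max x 0 + 1, ⟨by positivity, fun V _ _ _ ρ hρ v hv => ?_⟩, by linarith [le_max_left x 0]⟩
  exact absurd (le_two_of_mem_kazhdanSet hc ρ hρ hv) h2.not_ge

theorem exists_mem_mul_norm_le_of_mem_orthogonal_fixedSubmodule {S : Set G} {H : Subgroup G}
    (hN : H.Normal) {a : ℝ} (ha : a ∈ kazhdanSet G H S) {V : Type} [NormedAddCommGroup V]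
    [InnerProductSpace ℂ V] [CompleteSpace V] {ρ : G →* (V ≃ₗᵢ[ℂ] V)} {v₁ v₂ : V}
    (hv₁ : v₁ ∈ fixedSubmodule ρ H) (hv₂ : v₂ ∈ (fixedSubmodule ρ H)ᗮ) (hv₂0 : v₂ ≠ 0) :
    ∃ t ∈ S, a * ‖v₂‖ ≤ ‖ρ t (v₁ + v₂) - (v₁ + v₂)‖ := by
  obtain ⟨t, ht, htv⟩ := ha.2 _ (orthogonalFixedRep hN)
    (fun _ hw => orthogonalFixedRep_eq_zero_of_forall_fixed hN hw) ⟨v₂, hv₂⟩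
    (by simpa using hv₂0)
  refine ⟨t, ht, htv.trans ?_⟩
  calc ‖orthogonalFixedRep hN t ⟨v₂, hv₂⟩ - ⟨v₂, hv₂⟩‖ = ‖ρ t v₂ - v₂‖ := rfl
    _ ≤ ‖(ρ t v₁ - v₁) + (ρ t v₂ - v₂)‖ := norm_le_norm_add_of_mem_orthogonal
        (sub_mem (map_mem_fixedSubmodule hN t hv₁) hv₁)
        (sub_mem (map_mem_orthogonal_fixedSubmodule hN t hv₂) hv₂)
    _ = ‖ρ t (v₁ + v₂) - (v₁ + v₂)‖ := by rw [map_add]; abel_nf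

theorem mul_div_two_mem_kazhdanSet {S : Set G} {H : Subgroup G} (hN : H.Normal) {a b : ℝ}
    (ha : a ∈ kazhdanSet G H S) (ha2 : a ≤ 2) (hb : b ∈ kazhdanSet G Set.univ (S ∪ H))
    (hbpos : 0 < b) : a * b / 2 ∈ kazhdanSet G Set.univ S := by
  have ha0 := ha.1
  refine ⟨by positivity, fun V _ _ _ ρ hρ v hv => ?_⟩
  obtain ⟨s, hs | hs, hsv⟩ := hb.2 V ρ hρ v hv
  · refine ⟨s, hs, le_trans ?_ hsv⟩
    have := mul_nonneg (mul_nonneg hbpos.le (norm_nonneg v)) (sub_nonneg.2 ha2)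
    linarith
  have : CompleteSpace (fixedSubmodule ρ H) := (isClosed_fixedSubmodule ρ H).completeSpace_coe
  obtain ⟨v₁, hv₁, v₂, hv₂, rfl⟩ := (fixedSubmodule ρ H).exists_add_mem_mem_orthogonal v
  have hbv₂ : b * ‖v₁ + v₂‖ ≤ 2 * ‖v₂‖ :=
    calc b * ‖v₁ + v₂‖ ≤ ‖ρ s (v₁ + v₂) - (v₁ + v₂)‖ := hsv
      _ = ‖ρ s v₂ - v₂‖ := by rw [map_add, hv₁ s hs]; abel_nf
      _ ≤ 2 * ‖v₂‖ := (ρ s).norm_apply_sub_le v₂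
  have hv₂0 : v₂ ≠ 0 := by
    rintro rfl
    have := mul_pos hbpos (norm_pos_iff.2 hv)
    simp only [norm_zero, mul_zero] at hbv₂
    linarith
  obtain ⟨t, ht, htv⟩ := exists_mem_mul_norm_le_of_mem_orthogonal_fixedSubmodule hN ha hv₁ hv₂ hv₂0
  exact ⟨t, ht, by nlinarith⟩

end Kazhdan

theorem kazhdan_const_relative_bound_general
    (G : Type) [Group G] (S : Set G) (H : Subgroup G) (hN : H.Normal) :
    (1 / 2 : ℝ) * (kazhdanConst G (H : Set G) S * kazhdanConst G Set.univ (S ∪ (H : Set G)))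
      ≤ kazhdanConst G Set.univ S := by
  by_cases hA : ∃ a ∈ kazhdanSet G H S, 2 < a
  · obtain ⟨a, ha, ha2⟩ := hA
    rw [kazhdanConst_eq_zero_of_two_lt ha ha2 S, zero_mul, mul_zero]
    exact kazhdanConst_nonneg _ _
  by_cases hC : ∃ c ∈ kazhdanSet G Set.univ S, 2 < c
  · obtain ⟨c, hc, hc2⟩ := hC
    rw [kazhdanConst_eq_zero_of_two_lt hc hc2 (S ∪ H), mul_zero, mul_zero]
    exact kazhdanConst_nonneg _ _
  push Not at hA hC
  suffices kazhdanConst G H S * kazhdanConst G Set.univ (S ∪ H) ≤ 2 * kazhdanConst G Set.univ S by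
    linarith
  rw [kazhdanConst_eq_sSup, kazhdanConst_eq_sSup]
  refine Real.sSup_mul_sSup_le (fun a ha => ha.1)
    (mul_nonneg zero_le_two (kazhdanConst_nonneg _ _)) fun a ha b hb => ?_
  rcases hb.1.eq_or_lt with rfl | hbpos
  · rw [mul_zero]; exact mul_nonneg zero_le_two (kazhdanConst_nonneg _ _)
  have : a * b / 2 ≤ kazhdanConst G Set.univ S := by
    rw [kazhdanConst_eq_sSup]
    exact le_csSup ⟨2, hC⟩ (mul_div_two_mem_kazhdanSet hN ha (hA a ha) hb hbpos)
  linarith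

/-- `movesBy G S ε` : in every unitary representation of `G` without nonzero invariant
vectors, every unit vector is moved by at least `ε` by some element of `S`. -/
theorem kazhdan_const_relative_bound
    (G : Type) [Group G] (S : Set G) (hSfin : S.Finite) (hSgen : Subgroup.closure S = ⊤)
    (H : Subgroup G) (hN : H.Normal) :
    (1 / 2 : ℝ) * (kazhdanConst G (H : Set G) S * kazhdanConst G Set.univ (S ∪ (H : Set G)))
      ≤ kazhdanConst G Set.univ S :=
  kazhdan_const_relative_bound_general G S H hN
end

section
/- Suppose lk urns are grouped into l boxes of size k each, and p balls are placed into distinct urns uniformly at random (p < lk). Then the probability that at least q balls land in the first box is at most C(p,q)·(k/(lk−p))^q, which is in turn at most (ep/(ql))^q · exp(qp/(kl−p)). -/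
open Finset

lemma dF_split (n : ℕ) : ∀ s m : ℕ, n.descFactorial (s + m) = (n - m).descFactorial s * n.descFactorial m := by
  intro s
  induction s with
  | zero => intro m; simp
  | succ s ih =>
    intro m
    have h : s + 1 + m = (s + m) + 1 := by ring
    rw [h, Nat.descFactorial_succ, ih m, Nat.descFactorial_succ]
    have h2 : n - (s + m) = n - m - s := by omega
    rw [h2]; ring

lemma key_nat (l k p q : ℕ) (hqp : q ≤ p) :
    k.descFactorial q * (l*k - p)^q ≤ k^q * (l*k - (p-q)).descFactorial q := by
  rw [Nat.descFactorial_eq_prod_range, Nat.descFactorial_eq_prod_range,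
    show (l*k-p)^q = ∏ _i ∈ range q, (l*k-p) by simp,
    show k^q = ∏ _i ∈ range q, k by simp,
    ← Finset.prod_mul_distrib, ← Finset.prod_mul_distrib]
  apply Finset.prod_le_prod'
  intro i hi
  rw [mem_range] at hi
  exact Nat.mul_le_mul (Nat.sub_le k i) (by omega)

lemma count_AS (l k p q : ℕ) (hl : 0 < l) (S : Finset (Fin p)) (hS : S.card = q) :
    (univ.filter (fun f : Fin p ↪ Fin l × Fin k => ∀ i ∈ S, (f i).1 = (⟨0, hl⟩ : Fin l))).card
      ≤ k.descFactorial q * (l*k).descFactorial (p - q) := by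
  classical
  set box : Fin l := ⟨0, hl⟩
  set T : Finset ((↥S → Fin k) × (↥(Sᶜ) ↪ Fin l × Fin k)) :=
    (univ.filter (fun h : ↥S → Fin k => Function.Injective h)) ×ˢ univ with hT
  have hcard : T.card = k.descFactorial q * (l*k).descFactorial (p - q) := by
    rw [hT, card_product]
    congr 1
    · rw [← Fintype.card_subtype]
      rw [Fintype.card_congr (Equiv.subtypeInjectiveEquivEmbedding ↥S (Fin k))]
      rw [Fintype.card_embedding_eq]
      simp [Fintype.card_coe, hS]
    · rw [card_univ, Fintype.card_embedding_eq]
      simp [Fintype.card_coe, Fintype.card_prod, card_compl, hS]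
  rw [← hcard]
  apply Finset.card_le_card_of_injOn
    (fun f => (fun i : ↥S => (f i.1).2, ⟨fun i : ↥(Sᶜ) => f i.1,
      fun a b hab => Subtype.ext (f.injective hab)⟩))
  · intro f hf
    simp only [mem_coe, mem_filter, mem_univ, true_and] at hf
    simp only [mem_coe, hT, mem_product, mem_filter, mem_univ, true_and, and_true]
    intro a b hab
    have ha := hf a.1 a.2
    have hb := hf b.1 b.2
    have : f a.1 = f b.1 := Prod.ext (ha.trans hb.symm) hab
    exact Subtype.ext (f.injective this)
  · intro f hf g hg hfg
    simp only [mem_coe, mem_filter, mem_univ, true_and] at hf hg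
    simp only [Prod.mk.injEq] at hfg
    obtain ⟨h1, h2⟩ := hfg
    apply DFunLike.ext f g
    intro i
    by_cases hi : i ∈ S
    · have e1 : (f i).2 = (g i).2 := congrFun h1 ⟨i, hi⟩
      have e2 : (f i).1 = (g i).1 := (hf i hi).trans (hg i hi).symm
      exact Prod.ext e2 e1
    · exact congrFun (congrArg (fun e => e.toFun) h2) ⟨i, mem_compl.2 hi⟩

theorem balls_in_boxes_probability
    (l k p q : ℕ) (hl : 0 < l) (hk : 0 < k) (hq : 0 < q) (hqp : q ≤ p) (hp : p < l * k) :
    (((univ.filter fun f : Fin p ↪ Fin l × Fin k =>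
        q ≤ (univ.filter fun i : Fin p => (f i).1 = (⟨0, hl⟩ : Fin l)).card).card : ℝ)
      ≤ (p.choose q : ℝ) * ((k : ℝ) / ((l : ℝ) * k - p)) ^ q
          * (Fintype.card (Fin p ↪ Fin l × Fin k) : ℝ)) ∧
    ((p.choose q : ℝ) * ((k : ℝ) / ((l : ℝ) * k - p)) ^ q
      ≤ (Real.exp 1 * p / ((q : ℝ) * l)) ^ q * Real.exp ((q : ℝ) * p / ((k : ℝ) * l - p))) := by
  classical
  have hL : (0:ℝ) < l := Nat.cast_pos.2 hl
  have hQ : (0:ℝ) < q := Nat.cast_pos.2 hq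
  have hP : (0:ℝ) < p := Nat.cast_pos.2 (hq.trans_le hqp)
  have hDn : (0:ℝ) < (l:ℝ) * k - p := by
    have : (p:ℝ) < (l:ℝ) * k := by exact_mod_cast hp
    linarith
  constructor
  · -- Part 1
    set box : Fin l := ⟨0, hl⟩
    set A := univ.filter fun f : Fin p ↪ Fin l × Fin k =>
        q ≤ (univ.filter fun i : Fin p => (f i).1 = box).card with hA
    have hsub : A ⊆ (powersetCard q (univ : Finset (Fin p))).biUnion
        (fun S => univ.filter (fun f : Fin p ↪ Fin l × Fin k => ∀ i ∈ S, (f i).1 = box)) := by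
      intro f hf
      rw [hA, mem_filter] at hf
      obtain ⟨S, hSsub, hScard⟩ := Finset.exists_subset_card_eq hf.2
      rw [mem_biUnion]
      refine ⟨S, mem_powersetCard_univ.2 hScard, ?_⟩
      rw [mem_filter]
      exact ⟨mem_univ f, fun i hi => (mem_filter.1 (hSsub hi)).2⟩
    have hnat : A.card ≤ p.choose q * (k.descFactorial q * (l*k).descFactorial (p - q)) := by
      calc A.card ≤ _ := Finset.card_le_card hsub
        _ ≤ ∑ S ∈ powersetCard q (univ : Finset (Fin p)),
              (univ.filter (fun f : Fin p ↪ Fin l × Fin k => ∀ i ∈ S, (f i).1 = box)).card :=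
            Finset.card_biUnion_le
        _ ≤ ∑ _S ∈ powersetCard q (univ : Finset (Fin p)),
              (k.descFactorial q * (l*k).descFactorial (p - q)) := by
            apply Finset.sum_le_sum
            intro S hS
            exact count_AS l k p q hl S (mem_powersetCard_univ.1 hS)
        _ = p.choose q * (k.descFactorial q * (l*k).descFactorial (p - q)) := by
            rw [Finset.sum_const, smul_eq_mul, card_powersetCard, card_univ, Fintype.card_fin]
    have hT : (Fintype.card (Fin p ↪ Fin l × Fin k) : ℕ) = (l*k).descFactorial p := by
      rw [Fintype.card_embedding_eq, Fintype.card_prod, Fintype.card_fin, Fintype.card_fin,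
        Fintype.card_fin]
    have hsplit : (l*k).descFactorial p
        = (l*k - (p-q)).descFactorial q * (l*k).descFactorial (p - q) := by
      conv_lhs => rw [show p = q + (p - q) by omega]
      exact dF_split (l*k) q (p-q)
    -- key real inequality
    have hkey : (k.descFactorial q : ℝ)
        ≤ ((k : ℝ) / ((l : ℝ) * k - p)) ^ q * ((l*k - (p-q)).descFactorial q : ℝ) := by
      have hnat2 := key_nat l k p q hqp
      have hcast : ((l*k - p : ℕ) : ℝ) = (l:ℝ) * k - p := by
        rw [Nat.cast_sub hp.le, Nat.cast_mul]
      have h2 : (k.descFactorial q : ℝ) * ((l:ℝ) * k - p)^q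
          ≤ (k:ℝ)^q * ((l*k - (p-q)).descFactorial q : ℝ) := by
        rw [← hcast]
        exact_mod_cast hnat2
      rw [div_pow, div_mul_eq_mul_div, le_div_iff₀ (pow_pos hDn q)]
      exact h2
    calc (A.card : ℝ)
        ≤ (p.choose q : ℝ) * ((k.descFactorial q : ℝ) * ((l*k).descFactorial (p - q) : ℝ)) := by
          exact_mod_cast hnat
      _ ≤ (p.choose q : ℝ) * ((((k : ℝ) / ((l : ℝ) * k - p)) ^ q
            * ((l*k - (p-q)).descFactorial q : ℝ)) * ((l*k).descFactorial (p - q) : ℝ)) := by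
          apply mul_le_mul_of_nonneg_left _ (Nat.cast_nonneg _)
          exact mul_le_mul_of_nonneg_right hkey (Nat.cast_nonneg _)
      _ = (p.choose q : ℝ) * ((k : ℝ) / ((l : ℝ) * k - p)) ^ q
            * (Fintype.card (Fin p ↪ Fin l × Fin k) : ℝ) := by
          rw [hT, hsplit]
          push_cast
          ring
  · -- Part 2
    have hcomm : (l:ℝ) * k = (k:ℝ) * l := mul_comm _ _
    have hD : (0:ℝ) < (k:ℝ) * l - p := by linarith
    have hD' : (l:ℝ) * k - p = (k:ℝ) * l - p := by ring
    set D : ℝ := (k:ℝ) * l - p with hDdef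
    have h1 : (p.choose q : ℝ) ≤ (Real.exp 1 * p / q) ^ q := by
      calc (p.choose q : ℝ) ≤ (p:ℝ) ^ q / (q.factorial : ℝ) := Nat.choose_le_pow_div q p
        _ ≤ (Real.exp 1 * p / q) ^ q := by
          have h2 : ((q:ℝ)) ^ q / (q.factorial : ℝ) ≤ Real.exp q :=
            Real.pow_div_factorial_le_exp (q:ℝ) hQ.le q
          have hfac : (0:ℝ) < (q.factorial : ℝ) := by exact_mod_cast q.factorial_pos
          have hexp : Real.exp (q:ℝ) = Real.exp 1 ^ q := by
            rw [← Real.exp_nat_mul]; norm_num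
          have h3 : ((q:ℝ)) ^ q ≤ Real.exp 1 ^ q * (q.factorial : ℝ) := by
            rw [div_le_iff₀ hfac] at h2; rw [← hexp]; linarith
          rw [div_pow, mul_pow, div_le_div_iff₀ hfac (pow_pos hQ q)]
          calc (p:ℝ)^q * (q:ℝ)^q ≤ (p:ℝ)^q * (Real.exp 1 ^ q * (q.factorial:ℝ)) := by
                exact mul_le_mul_of_nonneg_left h3 (by positivity)
            _ = Real.exp 1 ^ q * (p:ℝ)^q * (q.factorial:ℝ) := by ring
    have h4 : ((k : ℝ) / ((l : ℝ) * k - p)) ^ q ≤ (1/(l:ℝ))^q * Real.exp ((q:ℝ) * p / D) := by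
      have he : (k : ℝ) / ((l : ℝ) * k - p) = (1/(l:ℝ)) * (1 + (p:ℝ)/D) := by
        rw [hD']; field_simp; rw [hDdef]; ring
      rw [he]
      have hx : (0:ℝ) ≤ (p:ℝ)/D := by positivity
      calc ((1/(l:ℝ)) * (1 + (p:ℝ)/D)) ^ q ≤ ((1/(l:ℝ)) * Real.exp ((p:ℝ)/D)) ^ q := by
            apply pow_le_pow_left₀ (by positivity)
            exact mul_le_mul_of_nonneg_left (by linarith [Real.add_one_le_exp ((p:ℝ)/D)])
              (by positivity)
        _ = (1/(l:ℝ))^q * Real.exp ((q:ℝ) * p / D) := by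
            rw [mul_pow, ← Real.exp_nat_mul, mul_div_assoc]
    calc (p.choose q : ℝ) * ((k : ℝ) / ((l : ℝ) * k - p)) ^ q
        ≤ (Real.exp 1 * p / q) ^ q * ((1/(l:ℝ))^q * Real.exp ((q:ℝ) * p / D)) := by
          apply mul_le_mul h1 h4
            (pow_nonneg (div_nonneg (Nat.cast_nonneg k) (by rw [hD']; exact hD.le)) q)
            (by positivity)
      _ = (Real.exp 1 * p / ((q : ℝ) * l)) ^ q * Real.exp ((q : ℝ) * p / D) := by
          rw [← mul_assoc, ← mul_pow]
          congr 2
          field_simp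
end

section
/- Butterfly lemma for products: every permutation g of the product set A × B can be written as g = a·b·c where a, c ∈ Sym(A)^{|B|} (permutations moving only the A-coordinate, independently on each B-fiber) and b ∈ Sym(B)^{|A|} (permutations moving only the B-coordinate, independently on each A-fiber). -/
open Finset

/-- Decomposition of a regular "bipartite multigraph" into perfect matchings:
given `F : I × B → B` such that every `y' : B` has exactly `card I` preimages,
there is for each `y` a permutation `ε y` of the slots such that each
"color" `j : I` yields a bijection `y ↦ F (ε y j, y)`. -/
lemma latin : ∀ (n : ℕ) (I B : Type) [Fintype I] [Fintype B] [DecidableEq I] [DecidableEq B],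
    Fintype.card I = n → ∀ F : I × B → B,
    (∀ y' : B, (Finset.univ.filter fun p : I × B => F p = y').card = Fintype.card I) →
    ∃ ε : B → (I ≃ I), ∀ j : I, Function.Bijective fun y => F (ε y j, y) := by
  intro n
  induction n with
  | zero =>
    intro I B _ _ _ _ hcard F _
    haveI : IsEmpty I := Fintype.card_eq_zero_iff.mp hcard
    exact ⟨fun _ => Equiv.refl I, fun j => isEmptyElim j⟩
  | succ n ih =>
    intro I B _ _ _ _ hcard F hreg
    haveI : Nonempty I := Fintype.card_pos_iff.mp (by omega)
    obtain ⟨i₀⟩ := ‹Nonempty I›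
    -- Hall's condition for the neighborhood function
    set t : B → Finset B := fun y => univ.image fun i => F (i, y) with ht
    have hall : ∀ s : Finset B, s.card ≤ (s.biUnion t).card := by
      intro s
      have key : ((univ : Finset I) ×ˢ s).card ≤
          ((s.biUnion t).biUnion fun y' => univ.filter fun p : I × B => F p = y').card := by
        apply Finset.card_le_card
        intro p hp
        simp only [mem_product, mem_univ, true_and] at hp
        refine Finset.mem_biUnion.mpr ⟨F p, Finset.mem_biUnion.mpr ⟨p.2, hp, ?_⟩, by simp⟩
        simp only [ht, mem_image, mem_univ, true_and]
        exact ⟨p.1, by rw [Prod.mk.eta]⟩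
      have h1 : ((univ : Finset I) ×ˢ s).card = Fintype.card I * s.card := by
        rw [Finset.card_product, Finset.card_univ]
      have h2 : ((s.biUnion t).biUnion fun y' => univ.filter fun p : I × B => F p = y').card ≤
          (s.biUnion t).card * Fintype.card I := by
        calc ((s.biUnion t).biUnion fun y' => univ.filter fun p : I × B => F p = y').card
            ≤ ∑ y' ∈ s.biUnion t, (univ.filter fun p : I × B => F p = y').card :=
              Finset.card_biUnion_le
          _ = (s.biUnion t).card * Fintype.card I := by
              rw [Finset.sum_congr rfl fun y' _ => hreg y', Finset.sum_const, smul_eq_mul]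
      have hpos : 0 < Fintype.card I := by omega
      have := le_trans (h1 ▸ key) h2
      rw [mul_comm (s.biUnion t).card _] at this
      exact Nat.le_of_mul_le_mul_left this hpos
    obtain ⟨f, finj, hf⟩ := (Finset.all_card_le_biUnion_card_iff_exists_injective t).mp hall
    have fbij : Function.Bijective f := Finite.injective_iff_bijective.mp finj
    have hs : ∀ y, ∃ i, F (i, y) = f y := by
      intro y
      have := hf y
      simp only [ht, mem_image, mem_univ, true_and] at this
      exact this
    choose s hsF using hs
    -- the "twisted" function: slot i₀ always maps to f y
    set Ft : I × B → B := fun p => F (Equiv.swap i₀ (s p.2) p.1, p.2) with hFt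
    have hFt_i₀ : ∀ y, Ft (i₀, y) = f y := by
      intro y; simp only [hFt, Equiv.swap_apply_left]; exact hsF y
    have hFt_reg : ∀ y' : B,
        (univ.filter fun p : I × B => Ft p = y').card = Fintype.card I := by
      intro y'
      rw [← hreg y']
      apply Finset.card_nbij' (fun p : I × B => (Equiv.swap i₀ (s p.2) p.1, p.2))
        (fun p : I × B => (Equiv.swap i₀ (s p.2) p.1, p.2))
      · intro p hp
        simp only [Finset.mem_coe, mem_filter, mem_univ, true_and] at hp ⊢
        exact hp
      · intro p hp
        simp only [Finset.mem_coe, mem_filter, mem_univ, true_and, hFt] at hp ⊢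
        simpa [Equiv.swap_apply_self] using hp
      · intro p _; simp [Equiv.swap_apply_self]
      · intro p _; simp [Equiv.swap_apply_self]
    -- count: removing the i₀ slots leaves n preimages for each y'
    have h_one : ∀ y' : B,
        ((univ.filter fun p : I × B => Ft p = y').filter fun p => p.1 = i₀).card = 1 := by
      intro y'
      obtain ⟨y₀, hy₀⟩ := fbij.2 y'
      rw [Finset.card_eq_one]
      refine ⟨(i₀, y₀), Finset.eq_singleton_iff_unique_mem.mpr ⟨?_, ?_⟩⟩
      · exact Finset.mem_filter.mpr ⟨Finset.mem_filter.mpr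
          ⟨Finset.mem_univ _, by rw [hFt_i₀]; exact hy₀⟩, rfl⟩
      · rintro ⟨i, y⟩ hq
        simp only [mem_filter, mem_univ, true_and] at hq
        obtain ⟨h1, h2⟩ := hq
        subst h2
        have hfy : f y = y' := by rw [← hFt_i₀ y]; exact h1
        have : y = y₀ := finj (hfy.trans hy₀.symm)
        subst this; rfl
    have hcard' : Fintype.card {i : I // i ≠ i₀} = n := by
      have h := Fintype.card_subtype_compl (fun i : I => i = i₀)
      have h2 : Fintype.card {i : I // i = i₀} = 1 := Fintype.card_subtype_eq i₀
      have h3 : Fintype.card {i : I // ¬ i = i₀} = Fintype.card I - 1 := by rw [h, h2]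
      simpa [hcard] using h3
    set F' : {i : I // i ≠ i₀} × B → B := fun p => Ft (p.1.1, p.2) with hF'
    have hreg' : ∀ y' : B,
        (univ.filter fun p : {i : I // i ≠ i₀} × B => F' p = y').card =
          Fintype.card {i : I // i ≠ i₀} := by
      intro y'
      have hsplit := Finset.card_filter_add_card_filter_not
        (s := univ.filter fun p : I × B => Ft p = y') (p := fun p => p.1 = i₀)
      rw [h_one y', hFt_reg y', hcard] at hsplit
      have hne : ((univ.filter fun p : I × B => Ft p = y').filter
          fun p => ¬ p.1 = i₀).card = n := by omega
      rw [hcard', ← hne]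
      refine Finset.card_bij'
        (fun (p : {i : I // i ≠ i₀} × B) _ => ((p.1.1 : I), p.2))
        (fun (p : I × B) hp => (⟨p.1, ?_⟩, p.2)) ?_ ?_ ?_ ?_
      · exact (Finset.mem_filter.mp hp).2
      · intro p hp
        simp only [mem_filter, mem_univ, true_and] at hp ⊢
        exact ⟨hp, p.1.2⟩
      · intro p hp
        simp only [mem_filter, mem_univ, true_and] at hp ⊢
        exact hp.1
      · intro p _; rfl
      · intro p _; rfl
    obtain ⟨ε', hε'⟩ := ih {i : I // i ≠ i₀} B hcard' F' hreg'
    have hdec : DecidablePred (fun i : I => i ≠ i₀) := fun i => instDecidableNot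
    set em : {i : I // i ≠ i₀} ≃ Subtype (fun i : I => i ≠ i₀) :=
      Equiv.refl _ with hem
    set ext : B → Equiv.Perm I := fun y => Equiv.Perm.extendDomain (ε' y) em with hext
    refine ⟨fun y => (ext y).trans (Equiv.swap i₀ (s y)), fun j => ?_⟩
    by_cases hj : j = i₀
    · have hfix : ∀ y, ext y i₀ = i₀ := fun y =>
        Equiv.Perm.extendDomain_apply_not_subtype (ε' y) em (by simp)
      have heq : (fun y => F (((ext y).trans (Equiv.swap i₀ (s y))) j, y)) = f := by
        funext y
        rw [Equiv.trans_apply, hj, hfix y, Equiv.swap_apply_left]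
        exact hsF y
      rw [heq]; exact fbij
    · have heq : (fun y => F (((ext y).trans (Equiv.swap i₀ (s y))) j, y))
          = fun y => F' (ε' y ⟨j, hj⟩, y) := by
        funext y
        have happ : ext y j = ((ε' y ⟨j, hj⟩ : {i : I // i ≠ i₀}) : I) := by
          rw [hext]
          rw [Equiv.Perm.extendDomain_apply_subtype (ε' y) em hj]
          rfl
        simp only [Equiv.trans_apply, happ]
        rfl
      rw [heq]; exact hε' ⟨j, hj⟩

/-- Any fiber-preserving permutation is given by a family of permutations of the fibers. -/
lemma fiber_perm {A B : Type} [Finite A] (f : Equiv.Perm (A × B)) (h : ∀ p, (f p).2 = p.2) :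
    ∃ σ : B → Equiv.Perm A, ∀ p : A × B, f p = (σ p.2 p.1, p.2) := by
  have hinj : ∀ y, Function.Injective fun x => (f (x, y)).1 := by
    intro y x₁ x₂ hx
    have hfe : f (x₁, y) = f (x₂, y) := Prod.ext hx (by rw [h, h])
    have := f.injective hfe
    exact (Prod.mk.injEq x₁ y x₂ y).mp this |>.1
  refine ⟨fun y => Equiv.ofBijective _ (Finite.injective_iff_bijective.mp (hinj y)),
    fun p => ?_⟩
  exact Prod.ext rfl (h p)

theorem butterfly_lemma (A B : Type) [Fintype A] [Fintype B] (g : Equiv.Perm (A × B)) :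
    ∃ a b c : Equiv.Perm (A × B),
      g = a * b * c ∧
      (∃ σ : B → Equiv.Perm A, ∀ p : A × B, a p = (σ p.2 p.1, p.2)) ∧
      (∃ τ : A → Equiv.Perm B, ∀ p : A × B, b p = (p.1, τ p.1 p.2)) ∧
      (∃ σ' : B → Equiv.Perm A, ∀ p : A × B, c p = (σ' p.2 p.1, p.2)) := by
  classical
  have hreg : ∀ y' : B, (Finset.univ.filter fun p : A × B => (fun q : A × B => (g q).2) p = y').card
      = Fintype.card A := by
    intro y'
    have h1 : (Finset.univ.filter fun p : A × B => (g p).2 = y').card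
        = (Finset.univ.filter fun q : A × B => q.2 = y').card := by
      refine Finset.card_nbij' (fun p => g p) (fun q => g.symm q) ?_ ?_ ?_ ?_
      · intro p hp
        simp only [Finset.mem_coe, mem_filter, mem_univ, true_and] at hp ⊢; exact hp
      · intro q hq
        simp only [Finset.mem_coe, mem_filter, mem_univ, true_and] at hq ⊢
        rw [Equiv.apply_symm_apply]; exact hq
      · intro p _; simp
      · intro q _; simp
    have h2 : (Finset.univ.filter fun q : A × B => q.2 = y') = Finset.univ ×ˢ {y'} := by
      ext ⟨x, y⟩
      simp [Finset.mem_product, eq_comm]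
    rw [h1, h2, Finset.card_product, Finset.card_univ, Finset.card_singleton, mul_one]
  obtain ⟨ε, hε⟩ := latin (Fintype.card A) A B rfl (fun q => (g q).2) hreg
  set τ : A → Equiv.Perm B := fun j => Equiv.ofBijective _ (hε j) with hτ
  set c : Equiv.Perm (A × B) :=
    { toFun := fun p => ((ε p.2).symm p.1, p.2)
      invFun := fun p => (ε p.2 p.1, p.2)
      left_inv := fun p => by simp
      right_inv := fun p => by simp } with hc
  set b : Equiv.Perm (A × B) :=
    { toFun := fun p => (p.1, τ p.1 p.2)
      invFun := fun p => (p.1, (τ p.1).symm p.2)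
      left_inv := fun p => by simp
      right_inv := fun p => by simp } with hb
  set a : Equiv.Perm (A × B) := g * c⁻¹ * b⁻¹ with ha
  have hb_inv : ∀ p : A × B, b⁻¹ p = (p.1, (τ p.1).symm p.2) := fun p => rfl
  have hc_inv : ∀ p : A × B, c⁻¹ p = (ε p.2 p.1, p.2) := fun p => rfl
  have ha2 : ∀ p : A × B, (a p).2 = p.2 := by
    intro p
    have : a p = g (ε ((τ p.1).symm p.2) p.1, (τ p.1).symm p.2) := by
      rw [ha, Equiv.Perm.mul_apply, Equiv.Perm.mul_apply, hb_inv, hc_inv]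
    rw [this]
    have : (g (ε ((τ p.1).symm p.2) p.1, (τ p.1).symm p.2)).2 = τ p.1 ((τ p.1).symm p.2) := rfl
    rw [this, Equiv.apply_symm_apply]
  obtain ⟨σ, hσ⟩ := fiber_perm a ha2
  exact ⟨a, b, c, by rw [ha]; group, ⟨σ, hσ⟩, ⟨τ, fun p => rfl⟩,
    ⟨fun y => (ε y).symm, fun p => rfl⟩⟩
end
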